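/- The discriminant of f̃ equals 16(λ1²−λ2²)(λ1²−λ3²)(λ2²−λ4²)(λ3²−λ4²) and is strictly positive; the quadratic f̃ has two distinct real roots α1 < α2 which satisfy 0 < α1 < α2 ≤ 1; moreover α2 = 1 if and only if λ1² + λ4² = λ2² + λ3². -/

import Mathlib

/-!
Since `λᵢ + λⱼ > 0`, the squares are strictly ordered, `λ₁² > λ₂² > λ₃² > λ₄²`, so the
discriminant identity (a polynomial identity) shows `Δ > 0`, and `f̃` factors as
`S̃ (t - α₁) (t - α₂)` with `α₁ < α₂`. By Vieta, `S̃ > 0`, `T̃ < 0`, `Ũ > 0` make both roots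
positive. Moreover `f̃(1) = (λ₁² + λ₄² - λ₂² - λ₃²)² ≥ 0` while the vertex `-T̃ / (2 S̃)` lies
below `1`, so `1` is not strictly between the roots nor below both: hence `α₂ ≤ 1`, with
equality exactly when `f̃(1) = 0`.
-/

def QuadraticFactors (a b c α₁ α₂ : ℝ) : Prop :=
  ∀ t, a * t ^ 2 + b * t + c = a * (t - α₁) * (t - α₂)

theorem exists_quadraticFactors_of_discrim_pos {a b c : ℝ} (ha : 0 < a)
    (hΔ : 0 < discrim a b c) :
    ∃ α₁ α₂, α₁ < α₂ ∧ QuadraticFactors a b c α₁ α₂ := by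
  set s := √(discrim a b c)
  have hs : s ^ 2 = b ^ 2 - 4 * a * c := Real.sq_sqrt hΔ.le
  have hs_pos : 0 < s := Real.sqrt_pos.2 hΔ
  refine ⟨(-b - s) / (2 * a), (-b + s) / (2 * a), ?_, fun t => ?_⟩
  · gcongr
    linarith
  · field_simp
    linear_combination hs

namespace QuadraticFactors

variable {a b c α₁ α₂ : ℝ}

theorem eq_zero_iff (h : QuadraticFactors a b c α₁ α₂) (ha : a ≠ 0) (t : ℝ) :
    a * t ^ 2 + b * t + c = 0 ↔ t = α₁ ∨ t = α₂ := by
  simp only [h t, mul_eq_zero, ha, sub_eq_zero, false_or]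

theorem mul_add_roots (h : QuadraticFactors a b c α₁ α₂) : a * (α₁ + α₂) = -b := by
  linear_combination h 1 - h 0

theorem mul_mul_roots (h : QuadraticFactors a b c α₁ α₂) : a * (α₁ * α₂) = c := by
  linear_combination -h 0

theorem left_pos (h : QuadraticFactors a b c α₁ α₂) (ha : 0 < a) (hb : b < 0) (hc : 0 < c) :
    0 < α₁ := by
  have hsum : 0 < α₁ + α₂ := pos_of_mul_pos_right (h.mul_add_roots ▸ neg_pos.2 hb) ha.le
  have hprod : 0 < α₁ * α₂ := pos_of_mul_pos_right (h.mul_mul_roots ▸ hc) ha.le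
  by_contra! h₁
  nlinarith

theorem add_roots_lt_two (h : QuadraticFactors a b c α₁ α₂) (ha : 0 < a)
    (hvertex : 0 < 2 * a + b) : α₁ + α₂ < 2 := by
  nlinarith [h.mul_add_roots]

theorem right_le_one (h : QuadraticFactors a b c α₁ α₂) (ha : 0 < a)
    (hvertex : 0 < 2 * a + b) (hone : 0 ≤ a + b + c) : α₂ ≤ 1 := by
  have hsum := h.add_roots_lt_two ha hvertex
  have h1 : 0 ≤ a * ((1 - α₁) * (1 - α₂)) := by linarith [h 1]
  by_contra! h₂
  nlinarith [nonneg_of_mul_nonneg_right h1 ha]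

theorem right_eq_one_iff (h : QuadraticFactors a b c α₁ α₂) (ha : 0 < a)
    (hvertex : 0 < 2 * a + b) (hlt : α₁ < α₂) : α₂ = 1 ↔ a + b + c = 0 := by
  have hsum := h.add_roots_lt_two ha hvertex
  have hroot : a + b + c = 0 ↔ 1 = α₁ ∨ 1 = α₂ := by simpa using h.eq_zero_iff ha.ne' 1
  rw [hroot]
  constructor
  · exact Or.inr ∘ Eq.symm
  · rintro (h₁ | h₁) <;> linarith

end QuadraticFactors

theorem ftilde_roots
    (l1 l2 l3 l4 : ℝ) (h12 : l2 < l1) (h23 : l3 < l2) (h34 : l4 < l3)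
    (s12 : 0 < l1 + l2)
    (s23 : 0 < l2 + l3) (s34 : 0 < l3 + l4)
    (St Tt Ut : ℝ)
    (hSt : St = (l1^2 - l4^2)^2)
    (hTt : Tt = -(2 * ((l1^2 - l2^2) * (l3^2 - l4^2) + (l1^2 - l3^2) * (l2^2 - l4^2))))
    (hUt : Ut = (l2^2 - l3^2)^2) :
    Tt ^ 2 - 4 * St * Ut
        = 16 * (l1^2 - l2^2) * (l1^2 - l3^2) * (l2^2 - l4^2) * (l3^2 - l4^2) ∧
    0 < Tt ^ 2 - 4 * St * Ut ∧
    ∃ α1 α2 : ℝ, α1 < α2 ∧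
      (∀ t : ℝ, St * t ^ 2 + Tt * t + Ut = 0 ↔ t = α1 ∨ t = α2) ∧
      0 < α1 ∧ α2 ≤ 1 ∧ (α2 = 1 ↔ l1 ^ 2 + l4 ^ 2 = l2 ^ 2 + l3 ^ 2) := by
  have d12 : 0 < l1 ^ 2 - l2 ^ 2 := sub_pos.2 (sq_lt_sq' (neg_lt_iff_pos_add'.2 s12) h12)
  have d23 : 0 < l2 ^ 2 - l3 ^ 2 := sub_pos.2 (sq_lt_sq' (neg_lt_iff_pos_add'.2 s23) h23)
  have d34 : 0 < l3 ^ 2 - l4 ^ 2 := sub_pos.2 (sq_lt_sq' (neg_lt_iff_pos_add'.2 s34) h34)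
  have d13 : 0 < l1 ^ 2 - l3 ^ 2 := by linarith
  have d24 : 0 < l2 ^ 2 - l4 ^ 2 := by linarith
  have hdisc : Tt ^ 2 - 4 * St * Ut
      = 16 * (l1^2 - l2^2) * (l1^2 - l3^2) * (l2^2 - l4^2) * (l3^2 - l4^2) := by
    subst hSt hTt hUt; ring
  have hΔ : 0 < Tt ^ 2 - 4 * St * Ut := by
    rw [hdisc]; have := mul_pos (mul_pos (mul_pos d12 d13) d24) d34; linarith
  have hS : 0 < St := hSt ▸ pow_pos (by linarith) 2
  have hT : Tt < 0 := by rw [hTt]; nlinarith [mul_pos d12 d34, mul_pos d13 d24]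
  have hU : 0 < Ut := hUt ▸ pow_pos d23 2
  have hvertex : 0 < 2 * St + Tt := by
    rw [hSt, hTt]; nlinarith [mul_pos d12 d23, mul_pos d34 d23, mul_pos d12 d12, mul_pos d34 d34]
  have hone : St + Tt + Ut = (l1 ^ 2 + l4 ^ 2 - (l2 ^ 2 + l3 ^ 2)) ^ 2 := by
    subst hSt hTt hUt; ring
  obtain ⟨α1, α2, hlt, hq⟩ := exists_quadraticFactors_of_discrim_pos hS hΔ
  refine ⟨hdisc, hΔ, α1, α2, hlt, hq.eq_zero_iff hS.ne', hq.left_pos hS hT hU,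
    hq.right_le_one hS hvertex (hone ▸ sq_nonneg _), ?_⟩
  rw [hq.right_eq_one_iff hS hvertex hlt, hone, sq_eq_zero_iff, sub_eq_zero]
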